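/- There is no group homomorphism Φ from ℤ² to the group of order automorphisms of (E, E₊) such that for all (r, x, y) ∈ E the first component of Φ(1,0)(r, x, y) equals 5r and the first component of Φ(0,1)(r, x, y) equals (2 + √3)r. -/

import Mathlib

/-!
An additive automorphism of `E` acts on integer parts `(x, y)` through a `2 × 2` integer matrix:
the kernel of `(r, x, y) ↦ (x, y)` consists of elements divisible in `E` by every power of `5`,
and those must map to elements with integer part `0`. So `Φ` induces a homomorphism from `ℤ²` to
`GL₂(ℤ)`. Since `5⁶ ≡ 1 [MOD 9]`, the residues `j mod 9` and `k mod 3` of a representation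
`r = (j + k√3) / 5^(6i)` are determined by `r`, hence multiplying first components by `u + v√3`
forces the matrix to be `[[u, 3v], [v, u]]`, the first row modulo `9` and the second modulo `3`.
For `5` and `2 + √3`, determinant `±1` pins both `(2,2)`-entries to `2` modulo `9`, and then the
`(2,1)`-entry of the commutation relation reads `3 ≡ 0 [MOD 9]`.
-/

/-- The additive subgroup `E` of `ℝ × ℤ × ℤ`: all triples `(r, x, y)` such that
`r = (j + k√3)/5^(6i)`, `x ≡ j (mod 9)` and `y ≡ k (mod 3)` for some integers `i, j, k`. -/
def Eset : Set (ℝ × ℤ × ℤ) :=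
  {p | ∃ i j k : ℤ, p.1 = ((j : ℝ) + (k : ℝ) * Real.sqrt 3) / (5 : ℝ) ^ (6 * i) ∧
    p.2.1 ≡ j [ZMOD 9] ∧ p.2.2 ≡ k [ZMOD 3]}

/-- The positive cone `E₊ = {(r, x, y) ∈ E : r > 0} ∪ {(0, 0, 0)}`. -/
def Epos : Set (ℝ × ℤ × ℤ) :=
  {p | p ∈ Eset ∧ 0 < p.1} ∪ {0}

/-- An order automorphism of `(E, E₊)`: an additive group automorphism of `E`
(a bijection of `E` onto itself which is additive on `E`) with `φ(E₊) = E₊`. -/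
structure IsOrderAuto (φ : ℝ × ℤ × ℤ → ℝ × ℤ × ℤ) : Prop where
  bijOn : Set.BijOn φ Eset Eset
  addOn : ∀ p ∈ Eset, ∀ q ∈ Eset, φ (p + q) = φ p + φ q
  posEq : φ '' Epos = Epos

lemma int_add_mul_sqrt_three_inj {a b c d : ℤ} (h : (a : ℝ) + b * √3 = c + d * √3) :
    a = c ∧ b = d := by
  have hbd : b = d := by
    by_contra hbd
    have hirr : Irrational (((b - d : ℤ) : ℝ) * √3) :=
      (by simpa using Nat.prime_three.irrational_sqrt : Irrational √3).intCast_mul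
        (sub_ne_zero.mpr hbd)
    exact hirr.ne_int (c - a) (by push_cast; linarith)
  subst hbd
  exact ⟨by exact_mod_cast add_right_cancel h, rfl⟩

lemma five_pow_six_mul_modEq_one (m : ℕ) : (5 : ℤ) ^ (6 * m) ≡ 1 [ZMOD 9] := by
  rw [pow_mul]
  simpa using (show (5 : ℤ) ^ 6 ≡ 1 [ZMOD 9] by decide).pow m

lemma add_mul_sqrt_three_div_five_pow_add (j k i : ℤ) (m : ℕ) :
    ((j : ℝ) + k * √3) / 5 ^ (6 * i) =
      (((j * 5 ^ (6 * m) : ℤ) : ℝ) + ((k * 5 ^ (6 * m) : ℤ) : ℝ) * √3) / 5 ^ (6 * (i + m)) := by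
  have h6m : (5 : ℝ) ^ (6 * (m : ℤ)) = 5 ^ (6 * m) := by
    rw [← zpow_natCast]; push_cast; rfl
  rw [mul_add, zpow_add₀ (by norm_num), h6m]
  push_cast
  field_simp

lemma modEq_of_add_mul_sqrt_three_div_eq {i i' j j' k k' : ℤ}
    (h : ((j : ℝ) + k * √3) / 5 ^ (6 * i) = ((j' : ℝ) + k' * √3) / 5 ^ (6 * i')) :
    j ≡ j' [ZMOD 9] ∧ k ≡ k' [ZMOD 3] := by
  wlog hle : i ≤ i' generalizing i i' j j' k k'
  · obtain ⟨hj, hk⟩ := this h.symm (le_of_not_ge hle)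
    exact ⟨hj.symm, hk.symm⟩
  obtain ⟨m, rfl⟩ := Int.le.dest hle
  rw [add_mul_sqrt_three_div_five_pow_add j k i m, div_left_inj' (by positivity)] at h
  obtain ⟨rfl, rfl⟩ := int_add_mul_sqrt_three_inj h
  have h9 := five_pow_six_mul_modEq_one m
  exact ⟨by simpa using (h9.mul_left j).symm,
    by simpa using ((h9.of_dvd (by norm_num : (3 : ℤ) ∣ 9)).mul_left k).symm⟩

def HasRepAt (i : ℤ) (p : ℝ × ℤ × ℤ) : Prop :=
  ∃ j k : ℤ, p.1 = ((j : ℝ) + k * √3) / 5 ^ (6 * i) ∧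
    p.2.1 ≡ j [ZMOD 9] ∧ p.2.2 ≡ k [ZMOD 3]

lemma mem_Eset_iff {p : ℝ × ℤ × ℤ} : p ∈ Eset ↔ ∃ i, HasRepAt i p := Iff.rfl

lemma HasRepAt.add_nat {i : ℤ} {p : ℝ × ℤ × ℤ} (h : HasRepAt i p) (m : ℕ) :
    HasRepAt (i + m) p := by
  obtain ⟨j, k, h1, h2, h3⟩ := h
  have h9 := five_pow_six_mul_modEq_one m
  refine ⟨j * 5 ^ (6 * m), k * 5 ^ (6 * m), ?_, ?_, ?_⟩
  · rw [h1, add_mul_sqrt_three_div_five_pow_add j k i m]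
  · simpa using h2.trans (by simpa using (h9.mul_left j).symm)
  · simpa using h3.trans
      (by simpa using ((h9.of_dvd (by norm_num : (3 : ℤ) ∣ 9)).mul_left k).symm)

lemma HasRepAt.mono {i i' : ℤ} {p : ℝ × ℤ × ℤ} (h : HasRepAt i p) (hle : i ≤ i') :
    HasRepAt i' p := by
  obtain ⟨m, rfl⟩ := Int.le.dest hle
  exact h.add_nat m

lemma HasRepAt.add {i : ℤ} {p q : ℝ × ℤ × ℤ} (hp : HasRepAt i p) (hq : HasRepAt i q) :
    HasRepAt i (p + q) := by
  obtain ⟨j, k, h1, h2, h3⟩ := hp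
  obtain ⟨j', k', h1', h2', h3'⟩ := hq
  refine ⟨j + j', k + k', ?_, h2.add h2', h3.add h3'⟩
  simp only [Prod.fst_add, h1, h1']
  push_cast
  ring

lemma HasRepAt.neg {i : ℤ} {p : ℝ × ℤ × ℤ} (hp : HasRepAt i p) : HasRepAt i (-p) := by
  obtain ⟨j, k, h1, h2, h3⟩ := hp
  refine ⟨-j, -k, ?_, h2.neg, h3.neg⟩
  simp only [Prod.fst_neg, h1]
  push_cast
  ring

def Egroup : AddSubgroup (ℝ × ℤ × ℤ) where
  carrier := Eset
  zero_mem' := ⟨0, 0, 0, by simp, rfl, rfl⟩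
  add_mem' := by
    intro p q hp hq
    obtain ⟨i, hp⟩ := mem_Eset_iff.mp hp
    obtain ⟨i', hq⟩ := mem_Eset_iff.mp hq
    exact ⟨max i i', (hp.mono (le_max_left i i')).add (hq.mono (le_max_right i i'))⟩
  neg_mem' := by
    intro p hp
    obtain ⟨i, hp⟩ := mem_Eset_iff.mp hp
    exact ⟨i, hp.neg⟩

lemma exists_five_pow_smul_eq {p : ℝ × ℤ × ℤ} (hp : p ∈ Eset) (h0 : p.2 = 0) (n : ℕ) :
    ∃ e ∈ Eset, (5 : ℤ) ^ n • e = p := by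
  obtain ⟨i, j, k, h1, h2, h3⟩ := hp
  rw [h0] at h2 h3
  refine ⟨(((j * 5 ^ (5 * n) : ℤ) + (k * 5 ^ (5 * n) : ℤ) * √3) / 5 ^ (6 * (i + n)), 0, 0),
    ⟨i + n, _, _, rfl, by simpa using h2.mul_right (5 ^ (5 * n)),
      by simpa using h3.mul_right (5 ^ (5 * n))⟩, ?_⟩
  ext
  · rw [Prod.smul_fst, zsmul_eq_mul, h1, add_mul_sqrt_three_div_five_pow_add j k i n]
    push_cast
    ring
  · simpa using (congrArg Prod.fst h0).symm
  · simpa using (congrArg Prod.snd h0).symm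

lemma eq_zero_of_forall_five_pow_dvd {m : ℤ} (h : ∀ n : ℕ, (5 : ℤ) ^ n ∣ m) : m = 0 := by
  by_contra hm
  exact FiniteMultiplicity.not_iff_forall.mpr h (Int.finiteMultiplicity_iff.mpr ⟨by decide, hm⟩)

lemma modEq_of_fst_eq_mul {p q : ℝ × ℤ × ℤ} (hp : p ∈ Eset) (hq : q ∈ Eset) {u v : ℤ}
    (h : q.1 = (u + v * √3) * p.1) :
    q.2.1 ≡ u * p.2.1 + 3 * v * p.2.2 [ZMOD 9] ∧ q.2.2 ≡ v * p.2.1 + u * p.2.2 [ZMOD 3] := by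
  obtain ⟨i, j, k, h1, h2, h3⟩ := hp
  obtain ⟨i', j', k', h1', h2', h3'⟩ := hq
  have hprod : (((u * j + 3 * v * k : ℤ) : ℝ) + ((v * j + u * k : ℤ) : ℝ) * √3) / 5 ^ (6 * i) =
      ((j' : ℝ) + k' * √3) / 5 ^ (6 * i') := by
    rw [← h1', h, h1]
    push_cast
    linear_combination
      -(v * k : ℝ) / 5 ^ (6 * i) * Real.mul_self_sqrt (by norm_num : (0 : ℝ) ≤ 3)
  obtain ⟨hj, hk⟩ := modEq_of_add_mul_sqrt_three_div_eq hprod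
  have h3k : 3 * k ≡ 3 * p.2.2 [ZMOD 9] := h3.symm.mul_left' (c := 3)
  constructor
  · calc q.2.1 ≡ u * j + 3 * v * k [ZMOD 9] := h2'.trans hj.symm
      _ = u * j + v * (3 * k) := by ring
      _ ≡ u * p.2.1 + v * (3 * p.2.2) [ZMOD 9] := (h2.symm.mul_left u).add (h3k.mul_left v)
      _ = u * p.2.1 + 3 * v * p.2.2 := by ring
  · exact h3'.trans (hk.symm.trans
      (((h2.symm.of_dvd (by norm_num)).mul_left v).add (h3.symm.mul_left u)))

def intPart : Egroup →+ Fin 2 → ℤ :=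
  AddMonoidHom.mk' (fun p => ![(p : ℝ × ℤ × ℤ).2.1, (p : ℝ × ℤ × ℤ).2.2]) fun p q => by
    ext i; fin_cases i <;> rfl

noncomputable def intBasis : Fin 2 → Egroup :=
  ![⟨(1, 1, 0), 0, 1, 0, by simp, rfl, rfl⟩, ⟨(√3, 0, 1), 0, 0, 1, by simp, rfl, rfl⟩]

lemma intPart_intBasis (j : Fin 2) : intPart (intBasis j) = Pi.single j 1 := by
  ext i; fin_cases i <;> fin_cases j <;> rfl

lemma AddMonoidHom.eq_zero_of_intPart_eq_zero (g : Egroup →+ ℤ) {p : Egroup}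
    (hp : intPart p = 0) : g p = 0 := by
  have hp2 : (p : ℝ × ℤ × ℤ).2 = 0 := Prod.ext (congrFun hp 0) (congrFun hp 1)
  refine eq_zero_of_forall_five_pow_dvd fun n => ?_
  obtain ⟨e, he, hpe⟩ := exists_five_pow_smul_eq p.2 hp2 n
  rw [show p = (5 : ℤ) ^ n • ⟨e, he⟩ from Subtype.ext hpe.symm, map_zsmul, smul_eq_mul]
  exact dvd_mul_right _ _

lemma AddMonoidHom.map_eq_sum_intPart (g : Egroup →+ ℤ) (p : Egroup) :
    g p = ∑ j, intPart p j * g (intBasis j) := by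
  have hker : intPart (p - ∑ j, intPart p j • intBasis j) = 0 := by
    ext i
    fin_cases i <;> simp [intPart_intBasis]
  have := g.eq_zero_of_intPart_eq_zero hker
  rw [map_sub, sub_eq_zero, map_sum] at this
  simpa using this

noncomputable def intMatrix : AddMonoid.End Egroup →* Matrix (Fin 2) (Fin 2) ℤ where
  toFun f := Matrix.of fun i j => intPart (f (intBasis j)) i
  map_one' := by
    ext i j
    simp [intPart_intBasis, Matrix.one_apply, Pi.single_apply]
  map_mul' f g := by
    ext i j
    simp only [Matrix.of_apply, Matrix.mul_apply, AddMonoid.End.coe_mul, Function.comp_apply]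
    exact (((Pi.evalAddMonoidHom (fun _ => ℤ) i).comp (intPart.comp f)).map_eq_sum_intPart
      (g (intBasis j))).trans (Finset.sum_congr rfl fun _ _ => mul_comm _ _)

lemma intMatrix_modEq_of_fst_eq_mul {f : AddMonoid.End Egroup} {u v : ℤ}
    (hf : ∀ p : Egroup, (f p : ℝ × ℤ × ℤ).1 = (u + v * √3) * (p : ℝ × ℤ × ℤ).1) :
    intMatrix f 0 0 ≡ u [ZMOD 9] ∧ intMatrix f 0 1 ≡ 3 * v [ZMOD 9] ∧
      intMatrix f 1 0 ≡ v [ZMOD 3] ∧ intMatrix f 1 1 ≡ u [ZMOD 3] := by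
  have h0 := modEq_of_fst_eq_mul (intBasis 0).2 (f (intBasis 0)).2 (hf (intBasis 0))
  have h1 := modEq_of_fst_eq_mul (intBasis 1).2 (f (intBasis 1)).2 (hf (intBasis 1))
  simp only [intBasis] at h0 h1
  norm_num at h0 h1
  exact ⟨h0.1, h1.1, h0.2, h1.2⟩

def IsOrderAuto.toEnd {φ : ℝ × ℤ × ℤ → ℝ × ℤ × ℤ} (h : IsOrderAuto φ) :
    AddMonoid.End Egroup :=
  AddMonoidHom.mk' (fun p => ⟨φ p, h.bijOn.mapsTo p.2⟩) fun p q =>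
    Subtype.ext (h.addOn p p.2 q q.2)

def endHom {G : Type*} [AddMonoid G] (Φ : G → ℝ × ℤ × ℤ → ℝ × ℤ × ℤ)
    (hΦ : ∀ v, IsOrderAuto (Φ v)) (h0 : ∀ p ∈ Eset, Φ 0 p = p)
    (hadd : ∀ v w, ∀ p ∈ Eset, Φ (v + w) p = Φ v (Φ w p)) :
    Multiplicative G →* AddMonoid.End Egroup where
  toFun v := (hΦ v.toAdd).toEnd
  map_one' := AddMonoidHom.ext fun p => Subtype.ext (h0 p p.2)
  map_mul' v w := AddMonoidHom.ext fun p => Subtype.ext (hadd v.toAdd w.toAdd p p.2)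

lemma intCast_det_fin_two_eq_one_or_neg_one {R : Type*} [Ring R]
    {M : Matrix (Fin 2) (Fin 2) ℤ} (hM : IsUnit M) :
    (M 0 0 * M 1 1 - M 0 1 * M 1 0 : R) = 1 ∨ (M 0 0 * M 1 1 - M 0 1 * M 1 0 : R) = -1 := by
  rw [Matrix.isUnit_iff_isUnit_det, Int.isUnit_iff, Matrix.det_fin_two] at hM
  rcases hM with h | h <;> [left; right] <;> exact_mod_cast congrArg (Int.cast : ℤ → R) h

lemma not_commute_of_modEq {A C : Matrix (Fin 2) (Fin 2) ℤ} (hA : IsUnit A) (hC : IsUnit C)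
    (hA' : A 0 0 ≡ 5 [ZMOD 9] ∧ A 0 1 ≡ 0 [ZMOD 9] ∧ A 1 1 ≡ 5 [ZMOD 3])
    (hC' : C 0 0 ≡ 2 [ZMOD 9] ∧ C 0 1 ≡ 3 [ZMOD 9] ∧ C 1 0 ≡ 1 [ZMOD 3] ∧ C 1 1 ≡ 2 [ZMOD 3]) :
    ¬ Commute A C := by
  intro hAC
  have cast9 {a b : ℤ} (h : a ≡ b [ZMOD 9]) : (a : ZMod 9) = b :=
    (ZMod.intCast_eq_intCast_iff a b 9).mpr h
  have cast3 {a b : ℤ} (h : a ≡ b [ZMOD 3]) : 3 * (a : ZMod 9) = 3 * b := by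
    exact_mod_cast cast9 (h.mul_left' (c := 3))
  have hcomm : (A 1 0 * C 0 0 + A 1 1 * C 1 0 : ZMod 9) = C 1 0 * A 0 0 + C 1 1 * A 1 0 := by
    exact_mod_cast congrArg (Int.cast : ℤ → ZMod 9)
      (by simpa [Matrix.mul_apply, Fin.sum_univ_two] using congrFun (congrFun hAC.eq 1) 0)
  obtain ⟨a00, a01, a11⟩ := hA'
  obtain ⟨c00, c01, c10, c11⟩ := hC'
  have dA := intCast_det_fin_two_eq_one_or_neg_one (R := ZMod 9) hA
  have dC := intCast_det_fin_two_eq_one_or_neg_one (R := ZMod 9) hC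
  rw [cast9 a00, cast9 a01] at dA
  rw [cast9 c00, cast9 c01] at dC
  rw [cast9 a00, cast9 c00] at hcomm
  have ha11 := cast3 a11
  have hc10 := cast3 c10
  have hc11 := cast3 c11
  push_cast at ha11 hc10 hc11
  generalize (A 1 0 : ZMod 9) = a, (A 1 1 : ZMod 9) = b, (C 1 0 : ZMod 9) = c,
    (C 1 1 : ZMod 9) = d at *
  -- Reduction mod 9: `det = ±1` forces `b = d = 2`, and then `hcomm` says `3 * c = 0`.
  have key_b : ∀ x : ZMod 9, 3 * x = 3 * 5 → 5 * x = 1 ∨ 5 * x = -1 → x = 2 := by decide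
  have key_d : ∀ x : ZMod 9, 3 * x = 3 * 2 → 2 * x - 3 = 1 ∨ 2 * x - 3 = -1 → x = 2 := by decide
  push_cast at dA dC hcomm
  rw [zero_mul, sub_zero] at dA
  rw [hc10, mul_one] at dC
  obtain rfl := key_b b ha11 dA
  obtain rfl := key_d d hc11 dC
  have h3c : 3 * c = 0 := by linear_combination -hcomm
  exact absurd (hc10.symm.trans h3c) (by decide)

/-- There is no group homomorphism `Φ` from `ℤ²` to the group of order automorphisms of
`(E, E₊)` (automorphisms under composition, as maps of `E`) such that the first component
of `Φ(1,0)` scales by `5` and the first component of `Φ(0,1)` scales by `2 + √3`. -/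
theorem stmt_15 :
    ¬ ∃ Φ : ℤ × ℤ → (ℝ × ℤ × ℤ → ℝ × ℤ × ℤ),
      (∀ v, IsOrderAuto (Φ v)) ∧
      (∀ p ∈ Eset, Φ 0 p = p) ∧
      (∀ v w, ∀ p ∈ Eset, Φ (v + w) p = Φ v (Φ w p)) ∧
      (∀ p ∈ Eset, (Φ (1, 0) p).1 = 5 * p.1) ∧
      (∀ p ∈ Eset, (Φ (0, 1) p).1 = (2 + Real.sqrt 3) * p.1) := by
  rintro ⟨Φ, hΦ, h0, hadd, h5, h23⟩
  let ρ := intMatrix.comp (endHom Φ hΦ h0 hadd)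
  have hA := intMatrix_modEq_of_fst_eq_mul
    (f := endHom Φ hΦ h0 hadd (.ofAdd (1, 0))) (u := 5) (v := 0)
    fun p => (h5 p p.2).trans (by push_cast; ring)
  have hC := intMatrix_modEq_of_fst_eq_mul
    (f := endHom Φ hΦ h0 hadd (.ofAdd (0, 1))) (u := 2) (v := 1)
    fun p => (h23 p p.2).trans (by push_cast; ring)
  refine not_commute_of_modEq ((Group.isUnit _).map ρ) ((Group.isUnit _).map ρ)
    ⟨hA.1, hA.2.1.trans (by decide), hA.2.2.2⟩ ⟨hC.1, hC.2.1.trans (by decide), hC.2.2⟩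
    ((Commute.all (Multiplicative.ofAdd ((1, 0) : ℤ × ℤ)) (.ofAdd (0, 1))).map ρ)
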